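/- arXiv:2603.17335 — 4 statements merged into one kernel-verified Lean document; each statement's English description precedes it below -/
import Mathlib

section
/- Let Θ be a finite set of targets with |Θ| = m > 0, let V be a finite set of sensing actions, and for each a ∈ V let S(a) ⊆ Θ be the set of targets covered by a. Define the coverage utility f(A) = |⋃_{a∈A} S(a)| / m for A ⊆ V, and write f(s|A) := f(A ∪ {s}) − f(A) for the marginal gain. Then f is 2nd-order submodular: for all pairwise disjoint A, B, C ⊆ V and all s ∈ V, f(s|C) − f(s|A ∪ C) ≥ f(s|B ∪ C) − f(s|A ∪ B ∪ C). -/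
/-! The marginal gain of `s` at `A` counts the targets of `S s` not yet covered by `A`. Hence
`f(s|C) − f(s|A ∪ C)` counts the targets of `S s` covered by `A` but not by `C`, and this set
only shrinks when `C` grows to `B ∪ C`. -/

open Finset

namespace Finset

variable {β : Type*} [DecidableEq β]

theorem card_sdiff_sub_card_sdiff_union (T U W : Finset β) :
    ((T \ U).card : ℝ) - (T \ (W ∪ U)).card = ((T \ U) ∩ W).card := by
  have hsplit := card_sdiff_add_card_inter (T \ U) W
  rw [sdiff_sdiff_left, sup_eq_union, union_comm] at hsplit
  rw [← hsplit]
  push_cast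
  ring

end Finset

section Coverage

variable {α β : Type*} [DecidableEq α] [DecidableEq β]

/-- `A ↦ |⋃_{a ∈ A} S a| / m`; with `m = |Θ|` this is the coverage utility `f`. -/
noncomputable def coverage (S : α → Finset β) (m : ℕ) (A : Finset α) : ℝ :=
  ((A.biUnion S).card : ℝ) / m

variable (S : α → Finset β) (m : ℕ)

theorem coverage_marginal (A : Finset α) (s : α) :
    coverage S m (A ∪ {s}) - coverage S m A = ((S s \ A.biUnion S).card : ℝ) / m := by
  have hsplit := card_sdiff_add_card (S s) (A.biUnion S)
  rw [union_comm] at hsplit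
  rw [coverage, coverage, union_biUnion, singleton_biUnion, ← hsplit, div_sub_div_same]
  push_cast
  ring

theorem coverage_marginal_sub_marginal (A C : Finset α) (s : α) :
    (coverage S m (C ∪ {s}) - coverage S m C) - (coverage S m (A ∪ C ∪ {s}) - coverage S m (A ∪ C))
      = (((S s \ C.biUnion S) ∩ A.biUnion S).card : ℝ) / m := by
  rw [coverage_marginal, coverage_marginal, union_biUnion, div_sub_div_same,
    card_sdiff_sub_card_sdiff_union]

theorem coverage_marginal_sub_marginal_antitone (A B C : Finset α) (s : α) :
    (coverage S m (B ∪ C ∪ {s}) - coverage S m (B ∪ C))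
        - (coverage S m (A ∪ B ∪ C ∪ {s}) - coverage S m (A ∪ B ∪ C))
      ≤ (coverage S m (C ∪ {s}) - coverage S m C)
        - (coverage S m (A ∪ C ∪ {s}) - coverage S m (A ∪ C)) := by
  rw [union_assoc A B C, coverage_marginal_sub_marginal, coverage_marginal_sub_marginal]
  gcongr
  exact subset_union_right

end Coverage

theorem coverage_second_order_submodular_general {α β : Type*} [DecidableEq α] [DecidableEq β]
    (m : ℕ)
    (V : Finset α) (S : α → Finset β)
    (f : Finset α → ℝ)
    (hf : ∀ A : Finset α, f A = ((A.biUnion S).card : ℝ) / m) :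
    ∀ A B C : Finset α, A ⊆ V → B ⊆ V → C ⊆ V →
      Disjoint A B → Disjoint A C → Disjoint B C → ∀ s ∈ V,
      (f (C ∪ {s}) - f C) - (f (A ∪ C ∪ {s}) - f (A ∪ C)) ≥
        (f (B ∪ C ∪ {s}) - f (B ∪ C)) - (f (A ∪ B ∪ C ∪ {s}) - f (A ∪ B ∪ C)) := by
  obtain rfl : f = coverage S m := funext hf
  intro A B C _ _ _ _ _ _ s _
  exact coverage_marginal_sub_marginal_antitone S m A B C s

/-- **Coverage utility is 2nd-order submodular.**
With f(A) = |⋃_{a∈A} S(a)| / m and marginal gain f(s|A) = f(A ∪ {s}) − f(A),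
for all pairwise disjoint A, B, C ⊆ V and all s ∈ V:
f(s|C) − f(s|A ∪ C) ≥ f(s|B ∪ C) − f(s|A ∪ B ∪ C). -/
theorem coverage_second_order_submodular {α β : Type*} [DecidableEq α] [DecidableEq β]
    (Θ : Finset β) (m : ℕ) (hm : m = Θ.card) (hm0 : 0 < m)
    (V : Finset α) (S : α → Finset β) (hS : ∀ a ∈ V, S a ⊆ Θ)
    (f : Finset α → ℝ)
    (hf : ∀ A : Finset α, f A = ((A.biUnion S).card : ℝ) / m) :
    ∀ A B C : Finset α, A ⊆ V → B ⊆ V → C ⊆ V →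
      Disjoint A B → Disjoint A C → Disjoint B C → ∀ s ∈ V,
      (f (C ∪ {s}) - f C) - (f (A ∪ C ∪ {s}) - f (A ∪ C)) ≥
        (f (B ∪ C ∪ {s}) - f (B ∪ C)) - (f (A ∪ B ∪ C ∪ {s}) - f (A ∪ B ∪ C)) :=
  coverage_second_order_submodular_general m V S f hf
end

section
/- Let V be a finite ground set and let f : 2^V → ℝ be a normalized, monotone, submodular, and 2nd-order submodular set function. Fix an element a ∈ V and define the Value of Coordination g(N) = f({a}) − [f(N ∪ {a}) − f(N)] for N ⊆ V \ {a}. Then g is submodular as a function of N: for all N ⊆ N' ⊆ V \ {a} and every j ∈ (V \ {a}) \ N', g(N ∪ {j}) − g(N) ≥ g(N' ∪ {j}) − g(N'). -/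
/-!
The increment of the Value of Coordination, g(N ∪ {j}) − g(N) = f(a | N) − f(a | N ∪ {j}), is a
second difference of f. Second-order submodularity with A = N' \ N, B = {j}, C = N says exactly
that this second difference can only shrink when N grows to N'.
-/

open Finset

section

variable {α : Type*} [DecidableEq α]

def IsSecondOrderSubmodularOn (V : Finset α) (f : Finset α → ℝ) : Prop :=
  ∀ A B C : Finset α, A ⊆ V → B ⊆ V → C ⊆ V →
    Disjoint A B → Disjoint A C → Disjoint B C → ∀ s ∈ V,
    (f (C ∪ {s}) - f C) - (f (A ∪ C ∪ {s}) - f (A ∪ C)) ≥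
      (f (B ∪ C ∪ {s}) - f (B ∪ C)) - (f (A ∪ B ∪ C ∪ {s}) - f (A ∪ B ∪ C))

theorem IsSecondOrderSubmodularOn.secondDiff_antitone {V : Finset α} {f : Finset α → ℝ}
    (hf : IsSecondOrderSubmodularOn V f) {C D : Finset α} (hCD : C ⊆ D) (hDV : D ⊆ V)
    {j : α} (hjV : j ∈ V) (hjD : j ∉ D) {s : α} (hs : s ∈ V) :
    (f (C ∪ {s}) - f C) - (f (C ∪ {j} ∪ {s}) - f (C ∪ {j})) ≥
      (f (D ∪ {s}) - f D) - (f (D ∪ {j} ∪ {s}) - f (D ∪ {j})) := by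
  have key := hf (D \ C) {j} C (sdiff_subset.trans hDV) (singleton_subset_iff.2 hjV)
    (hCD.trans hDV) (disjoint_singleton_right.2 fun h => hjD (mem_sdiff.1 h).1)
    sdiff_disjoint (disjoint_singleton_left.2 fun h => hjD (hCD h)) s hs
  have hAC : D \ C ∪ C = D := sdiff_union_of_subset hCD
  have hABC : D \ C ∪ {j} ∪ C = D ∪ {j} := by rw [union_right_comm, hAC]
  rw [hAC, hABC, union_comm {j} C] at key
  linarith

end

theorem voc_submodular_general {α : Type*} [DecidableEq α]
    (V : Finset α) (f : Finset α → ℝ)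
    (hsub2 : ∀ A B C : Finset α, A ⊆ V → B ⊆ V → C ⊆ V →
      Disjoint A B → Disjoint A C → Disjoint B C → ∀ s ∈ V,
      (f (C ∪ {s}) - f C) - (f (A ∪ C ∪ {s}) - f (A ∪ C)) ≥
        (f (B ∪ C ∪ {s}) - f (B ∪ C)) - (f (A ∪ B ∪ C ∪ {s}) - f (A ∪ B ∪ C)))
    (a : α) (ha : a ∈ V)
    (g : Finset α → ℝ)
    (hg : ∀ N : Finset α, g N = f {a} - (f (N ∪ {a}) - f N)) :
    ∀ N N' : Finset α, N ⊆ N' → N' ⊆ V \ {a} → ∀ j ∈ (V \ {a}) \ N',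
      g (N ∪ {j}) - g N ≥ g (N' ∪ {j}) - g N' := by
  intro N N' hNN' hN'V j hj
  obtain ⟨hjVa, hjN'⟩ := mem_sdiff.1 hj
  have := IsSecondOrderSubmodularOn.secondDiff_antitone hsub2 hNN'
    (hN'V.trans sdiff_subset) (mem_sdiff.1 hjVa).1 hjN' ha
  rw [hg, hg, hg, hg]
  linarith

/-- **Value of Coordination is submodular.**
Let f : 2^V → ℝ be normalized, monotone, submodular, and 2nd-order submodular,
fix a ∈ V, and define g(N) = f({a}) − [f(N ∪ {a}) − f(N)] for N ⊆ V \ {a}.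
Then g is submodular in N: for all N ⊆ N' ⊆ V \ {a} and j ∈ (V \ {a}) \ N',
g(N ∪ {j}) − g(N) ≥ g(N' ∪ {j}) − g(N'). -/
theorem voc_submodular {α : Type*} [DecidableEq α]
    (V : Finset α) (f : Finset α → ℝ)
    (hnorm : f ∅ = 0)
    (hmono : ∀ A B : Finset α, A ⊆ B → B ⊆ V → f A ≤ f B)
    (hsub : ∀ A B : Finset α, A ⊆ B → B ⊆ V → ∀ s ∈ V,
      f (A ∪ {s}) - f A ≥ f (B ∪ {s}) - f B)
    (hsub2 : ∀ A B C : Finset α, A ⊆ V → B ⊆ V → C ⊆ V →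
      Disjoint A B → Disjoint A C → Disjoint B C → ∀ s ∈ V,
      (f (C ∪ {s}) - f C) - (f (A ∪ C ∪ {s}) - f (A ∪ C)) ≥
        (f (B ∪ C ∪ {s}) - f (B ∪ C)) - (f (A ∪ B ∪ C ∪ {s}) - f (A ∪ B ∪ C)))
    (a : α) (ha : a ∈ V)
    (g : Finset α → ℝ)
    (hg : ∀ N : Finset α, g N = f {a} - (f (N ∪ {a}) - f N)) :
    ∀ N N' : Finset α, N ⊆ N' → N' ⊆ V \ {a} → ∀ j ∈ (V \ {a}) \ N',
      g (N ∪ {j}) - g N ≥ g (N' ∪ {j}) - g N' :=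
  voc_submodular_general V f hsub2 a ha g hg
end

section
/- Let X and Y be nonempty finite sets, G : X × Y → ℝ a payoff matrix, and u(x,y) = Σ_{a∈X} Σ_{b∈Y} x(a) G(a,b) y(b) for mixed strategies x on X and y on Y. Let (x_1,…,x_T) and (y_1,…,y_T) be sequences of mixed strategies, with T ≥ 1, and let ε₁, ε₂ ≥ 0. Suppose the maximizer's average regret satisfies (1/T)[max_{x} Σ_{t=1}^T u(x, y_t) − Σ_{t=1}^T u(x_t, y_t)] ≤ ε₁ and the minimizer's average regret satisfies (1/T)[Σ_{t=1}^T u(x_t, y_t) − min_{y} Σ_{t=1}^T u(x_t, y)] ≤ ε₂. Then the time-averaged strategies x̄ = (1/T)Σ_t x_t and ȳ = (1/T)Σ_t y_t satisfy max_{x} u(x, ȳ) − min_{y} u(x̄, y) ≤ ε₁ + ε₂; in particular, (x̄, ȳ) is an (ε₁+ε₂)-Nash equilibrium of the zero-sum game. -/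
/-! Bilinearity of the payoff lets the averages pass through the regret sums: the value of the
best response to `ȳ` is `1/T` times the best cumulative payoff against `y₁, …, y_T`, and
symmetrically for `x̄`. The duality gap of `(x̄, ȳ)` is therefore `1/T` times the sum of the two
cumulative regrets. -/

/-- A mixed strategy on a finite action set: a probability distribution. -/
def IsMixed {X : Type*} [Fintype X] (p : X → ℝ) : Prop :=
  (∀ a, 0 ≤ p a) ∧ (∑ a, p a) = 1

open Matrix
open scoped Pointwise

section

variable {X Y : Type*} [Fintype X] [Fintype Y]

theorem sum_sum_mul_mul_eq_dotProduct_mulVec (G : Matrix X Y ℝ) (x : X → ℝ) (y : Y → ℝ) :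
    ∑ a, ∑ b, x a * G a b * y b = x ⬝ᵥ G *ᵥ y := by
  simp [dotProduct, mulVec, Finset.mul_sum, mul_assoc]

theorem dotProduct_mulVec_average_right {ι : Type*} [Fintype ι] (G : Matrix X Y ℝ)
    (x : X → ℝ) (c : ℝ) (y : ι → Y → ℝ) :
    x ⬝ᵥ G *ᵥ (fun b => c * ∑ t, y t b) = c * ∑ t, x ⬝ᵥ G *ᵥ y t := by
  have : (fun b => c * ∑ t, y t b) = c • ∑ t, y t := by ext; simp [Finset.sum_apply]
  rw [this, mulVec_smul, dotProduct_smul, mulVec_sum, dotProduct_sum, smul_eq_mul]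

theorem dotProduct_mulVec_average_left {ι : Type*} [Fintype ι] (G : Matrix X Y ℝ)
    (y : Y → ℝ) (c : ℝ) (x : ι → X → ℝ) :
    (fun a => c * ∑ t, x t a) ⬝ᵥ G *ᵥ y = c * ∑ t, x t ⬝ᵥ G *ᵥ y := by
  have : (fun a => c * ∑ t, x t a) = c • ∑ t, x t := by ext; simp [Finset.sum_apply]
  rw [this, smul_dotProduct, sum_dotProduct, smul_eq_mul]

namespace IsMixed

theorem average {T : ℕ} (hT : T ≠ 0) {x : Fin T → X → ℝ} (hx : ∀ t, IsMixed (x t)) :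
    IsMixed fun a => (1 / (T : ℝ)) * ∑ t, x t a := by
  refine ⟨fun a => mul_nonneg (by positivity) (Finset.sum_nonneg fun t _ => (hx t).1 a), ?_⟩
  rw [← Finset.mul_sum, Finset.sum_comm]
  simp [fun t => (hx t).2, hT]

theorem dotProduct_le {p v : X → ℝ} {M : ℝ} (hp : IsMixed p) (hv : ∀ a, v a ≤ M) :
    p ⬝ᵥ v ≤ M :=
  calc p ⬝ᵥ v ≤ ∑ a, p a * M :=
        Finset.sum_le_sum fun a _ => mul_le_mul_of_nonneg_left (hv a) (hp.1 a)
    _ = M := by rw [← Finset.sum_mul, hp.2, one_mul]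

theorem le_dotProduct {p v : X → ℝ} {M : ℝ} (hp : IsMixed p) (hv : ∀ a, M ≤ v a) :
    M ≤ p ⬝ᵥ v :=
  calc M = ∑ a, p a * M := by rw [← Finset.sum_mul, hp.2, one_mul]
    _ ≤ p ⬝ᵥ v := Finset.sum_le_sum fun a _ => mul_le_mul_of_nonneg_left (hv a) (hp.1 a)

theorem dotProduct_mulVec_le {G : Matrix X Y ℝ} {M : ℝ} (hG : ∀ a b, G a b ≤ M)
    {x : X → ℝ} {y : Y → ℝ} (hx : IsMixed x) (hy : IsMixed y) : x ⬝ᵥ G *ᵥ y ≤ M :=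
  hx.dotProduct_le fun a => by rw [mulVec, dotProduct_comm]; exact hy.dotProduct_le (hG a)

theorem le_dotProduct_mulVec {G : Matrix X Y ℝ} {M : ℝ} (hG : ∀ a b, M ≤ G a b)
    {x : X → ℝ} {y : Y → ℝ} (hx : IsMixed x) (hy : IsMixed y) : M ≤ x ⬝ᵥ G *ᵥ y :=
  hx.le_dotProduct fun a => by rw [mulVec, dotProduct_comm]; exact hy.le_dotProduct (hG a)

end IsMixed

theorem bddAbove_bestResponse (G : Matrix X Y ℝ) {y : Y → ℝ} (hy : IsMixed y) :
    BddAbove {v : ℝ | ∃ x : X → ℝ, IsMixed x ∧ v = x ⬝ᵥ G *ᵥ y} := by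
  obtain ⟨M, hM⟩ := (Set.finite_range (Function.uncurry G)).bddAbove
  exact ⟨M, by
    rintro _ ⟨x, hx, rfl⟩
    exact hx.dotProduct_mulVec_le (fun a b => hM ⟨(a, b), rfl⟩) hy⟩

theorem bddBelow_bestResponse (G : Matrix X Y ℝ) {x : X → ℝ} (hx : IsMixed x) :
    BddBelow {v : ℝ | ∃ y : Y → ℝ, IsMixed y ∧ v = x ⬝ᵥ G *ᵥ y} := by
  obtain ⟨M, hM⟩ := (Set.finite_range (Function.uncurry G)).bddBelow
  exact ⟨M, by
    rintro _ ⟨y, hy, rfl⟩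
    exact hx.le_dotProduct_mulVec (fun a b => hM ⟨(a, b), rfl⟩) hy⟩

end

theorem Real.setOf_mul_eq_smul {α : Type*} (P : α → Prop) (f : α → ℝ) (c : ℝ) :
    {v : ℝ | ∃ a, P a ∧ v = c * f a} = c • {v : ℝ | ∃ a, P a ∧ v = f a} := by
  ext v
  simp [Set.mem_smul_set, eq_comm]

-- No boundedness is needed: for unbounded sets both sides are the junk value `0`.
theorem Real.sSup_setOf_mul {α : Type*} (P : α → Prop) (f : α → ℝ) {c : ℝ}
    (hc : 0 ≤ c) :
    sSup {v : ℝ | ∃ a, P a ∧ v = c * f a} = c * sSup {v : ℝ | ∃ a, P a ∧ v = f a} := by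
  rw [Real.setOf_mul_eq_smul, Real.sSup_smul_of_nonneg hc, smul_eq_mul]

theorem Real.sInf_setOf_mul {α : Type*} (P : α → Prop) (f : α → ℝ) {c : ℝ}
    (hc : 0 ≤ c) :
    sInf {v : ℝ | ∃ a, P a ∧ v = c * f a} = c * sInf {v : ℝ | ∃ a, P a ∧ v = f a} := by
  rw [Real.setOf_mul_eq_smul, Real.sInf_smul_of_nonneg hc, smul_eq_mul]

theorem no_regret_implies_epsilon_NE_general {X Y : Type*} [Fintype X] [Fintype Y]
    (G : X → Y → ℝ)
    (u : (X → ℝ) → (Y → ℝ) → ℝ)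
    (hu : ∀ x y, u x y = ∑ a, ∑ b, x a * G a b * y b)
    (T : ℕ) (hT : 1 ≤ T)
    (x : Fin T → X → ℝ) (y : Fin T → Y → ℝ)
    (hx : ∀ t, IsMixed (x t)) (hy : ∀ t, IsMixed (y t))
    (ε₁ ε₂ : ℝ)
    (hreg₁ : (1 / (T : ℝ)) *
        (sSup {v : ℝ | ∃ x' : X → ℝ, IsMixed x' ∧ v = ∑ t, u x' (y t)} -
          ∑ t, u (x t) (y t)) ≤ ε₁)
    (hreg₂ : (1 / (T : ℝ)) *
        ((∑ t, u (x t) (y t)) -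
          sInf {v : ℝ | ∃ y' : Y → ℝ, IsMixed y' ∧ v = ∑ t, u (x t) y'}) ≤ ε₂)
    (xbar : X → ℝ) (hxbar : xbar = fun a => (1 / (T : ℝ)) * ∑ t, x t a)
    (ybar : Y → ℝ) (hybar : ybar = fun b => (1 / (T : ℝ)) * ∑ t, y t b) :
    (sSup {v : ℝ | ∃ x' : X → ℝ, IsMixed x' ∧ v = u x' ybar} -
        sInf {v : ℝ | ∃ y' : Y → ℝ, IsMixed y' ∧ v = u xbar y'} ≤ ε₁ + ε₂) ∧
    (∀ x' : X → ℝ, IsMixed x' → u xbar ybar ≥ u x' ybar - (ε₁ + ε₂)) ∧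
    (∀ y' : Y → ℝ, IsMixed y' → u xbar ybar ≤ u xbar y' + (ε₁ + ε₂)) := by
  obtain rfl : u = fun x y => x ⬝ᵥ of G *ᵥ y :=
    funext₂ fun x y => (hu x y).trans (sum_sum_mul_mul_eq_dotProduct_mulVec (of G) x y)
  beta_reduce at hreg₁ hreg₂ ⊢
  have hT₀ : T ≠ 0 := by omega
  have hxbar_mixed : IsMixed xbar := hxbar ▸ IsMixed.average hT₀ hx
  have hybar_mixed : IsMixed ybar := hybar ▸ IsMixed.average hT₀ hy
  have hmax : sSup {v | ∃ x' : X → ℝ, IsMixed x' ∧ v = x' ⬝ᵥ of G *ᵥ ybar} = 1 / (T : ℝ) *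
      sSup {v | ∃ x' : X → ℝ, IsMixed x' ∧ v = ∑ t, x' ⬝ᵥ of G *ᵥ y t} := by
    simp_rw [hybar, dotProduct_mulVec_average_right]
    exact Real.sSup_setOf_mul _ _ (by positivity)
  have hmin : sInf {v | ∃ y' : Y → ℝ, IsMixed y' ∧ v = xbar ⬝ᵥ of G *ᵥ y'} = 1 / (T : ℝ) *
      sInf {v | ∃ y' : Y → ℝ, IsMixed y' ∧ v = ∑ t, x t ⬝ᵥ of G *ᵥ y'} := by
    simp_rw [hxbar, dotProduct_mulVec_average_left]
    exact Real.sInf_setOf_mul _ _ (by positivity)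
  have hgap := add_le_add hreg₁ hreg₂
  rw [← mul_add, sub_add_sub_cancel, mul_sub, ← hmax, ← hmin] at hgap
  have hbr₁ := bddAbove_bestResponse (of G) hybar_mixed
  have hbr₂ := bddBelow_bestResponse (of G) hxbar_mixed
  have hval₁ := le_csSup hbr₁ ⟨xbar, hxbar_mixed, rfl⟩
  have hval₂ := csInf_le hbr₂ ⟨ybar, hybar_mixed, rfl⟩
  refine ⟨hgap, fun x' hx' => ?_, fun y' hy' => ?_⟩
  · linarith [le_csSup hbr₁ ⟨x', hx', rfl⟩]
  · linarith [csInf_le hbr₂ ⟨y', hy', rfl⟩]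

/-- **No-regret play yields an approximate Nash equilibrium.**
For a finite zero-sum game with payoff u(x,y) = Σ_a Σ_b x(a) G(a,b) y(b):
if the maximizer's average regret is at most ε₁ and the minimizer's average
regret is at most ε₂ over T rounds, then the time-averaged strategies
x̄ = (1/T)Σ_t x_t and ȳ = (1/T)Σ_t y_t have duality gap at most ε₁ + ε₂ and
form an (ε₁+ε₂)-Nash equilibrium. -/
theorem no_regret_implies_epsilon_NE {X Y : Type*} [Fintype X] [Fintype Y]
    [Nonempty X] [Nonempty Y]
    (G : X → Y → ℝ)
    (u : (X → ℝ) → (Y → ℝ) → ℝ)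
    (hu : ∀ x y, u x y = ∑ a, ∑ b, x a * G a b * y b)
    (T : ℕ) (hT : 1 ≤ T)
    (x : Fin T → X → ℝ) (y : Fin T → Y → ℝ)
    (hx : ∀ t, IsMixed (x t)) (hy : ∀ t, IsMixed (y t))
    (ε₁ ε₂ : ℝ) (hε₁ : 0 ≤ ε₁) (hε₂ : 0 ≤ ε₂)
    (hreg₁ : (1 / (T : ℝ)) *
        (sSup {v : ℝ | ∃ x' : X → ℝ, IsMixed x' ∧ v = ∑ t, u x' (y t)} -
          ∑ t, u (x t) (y t)) ≤ ε₁)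
    (hreg₂ : (1 / (T : ℝ)) *
        ((∑ t, u (x t) (y t)) -
          sInf {v : ℝ | ∃ y' : Y → ℝ, IsMixed y' ∧ v = ∑ t, u (x t) y'}) ≤ ε₂)
    (xbar : X → ℝ) (hxbar : xbar = fun a => (1 / (T : ℝ)) * ∑ t, x t a)
    (ybar : Y → ℝ) (hybar : ybar = fun b => (1 / (T : ℝ)) * ∑ t, y t b) :
    (sSup {v : ℝ | ∃ x' : X → ℝ, IsMixed x' ∧ v = u x' ybar} -
        sInf {v : ℝ | ∃ y' : Y → ℝ, IsMixed y' ∧ v = u xbar y'} ≤ ε₁ + ε₂) ∧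
    (∀ x' : X → ℝ, IsMixed x' → u xbar ybar ≥ u x' ybar - (ε₁ + ε₂)) ∧
    (∀ y' : Y → ℝ, IsMixed y' → u xbar ybar ≤ u xbar y' + (ε₁ + ε₂)) :=
  no_regret_implies_epsilon_NE_general G u hu T hT x y hx hy ε₁ ε₂ hreg₁ hreg₂ xbar hxbar ybar hybar
end

section
/- Consider the adversarial multi-armed bandit with K ≥ 2 arms and horizon T ≥ 1, where the adversary fixes in advance reward vectors r_1, …, r_T : Fin K → [0,1]. The EXP3 algorithm maintains weights w_1(i) = 1 for all arms i, at each round t samples an arm a_t from the distribution p_t(i) = w_t(i)/Σ_j w_t(j), observes only r_t(a_t), forms the importance-weighted estimates r̂_t(i) = 1 − [𝟙{a_t = i}/p_t(i)](1 − r_t(a_t)), and updates w_{t+1}(i) = w_t(i) · exp(η r̂_t(i)) with learning rate η = √(2 log K / (K T)). Then its expected regret satisfies max_{i} Σ_{t=1}^T r_t(i) − E[Σ_{t=1}^T r_t(a_t)] ≤ √(2 T K log K), where the expectation is over the algorithm's random arm draws. -/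
/-- The EXP3 weights after `t` rounds, given learning rate `η`, reward vectors
`r`, and a realized sequence `a` of sampled arms. The weights start at 1, and
after round `t` (with sampled arm `a t`) the weight of arm `i` is multiplied by
`exp (η * r̂_t i)`, where `r̂_t i = 1 − 𝟙{a t = i}/p_t(i) · (1 − r_t (a t))` is
the importance-weighted reward estimate and `p_t` is the distribution
proportional to the current weights. The weights after `t` rounds only depend
on the arms sampled in rounds before `t`. -/
noncomputable def exp3Weights (K T : ℕ) (η : ℝ) (r : Fin T → Fin K → ℝ)
    (a : Fin T → Fin K) : ℕ → Fin K → ℝ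
  | 0 => fun _ => 1
  | (t + 1) => fun i =>
      if ht : t < T then
        let wt := exp3Weights K T η r a t
        let pt : Fin K → ℝ := fun j => wt j / ∑ l, wt l
        let at' : Fin K := a ⟨t, ht⟩
        let rhat : Fin K → ℝ := fun j =>
          1 - (if at' = j then (1 : ℝ) else 0) / pt j * (1 - r ⟨t, ht⟩ at')
        wt i * Real.exp (η * rhat i)
      else exp3Weights K T η r a t i

/-!
For a fixed sequence of sampled arms, EXP3 is exponential weights run on the importance-weighted
reward estimates `r̂_t ≤ 1`. The potential argument (track `log ∑ᵢ w_t(i)`, using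
`exp (-x) ≤ 1 - x + x² / 2` for `x ≥ 0`) bounds `η ∑_t r̂_t(i)` by
`log K + ∑_t (η ⟪p_t, r̂_t⟫ + η² / 2 ⟪p_t, (1 - r̂_t)²⟫)`, where `⟪p_t, r̂_t⟫ = r_t(a_t)` and
`⟪p_t, (1 - r̂_t)²⟫ = (1 - r_t(a_t))² / p_t(a_t)`. Since `p_t` only depends on the arms drawn before
round `t`, averaging over `a_t ∼ p_t` first shows that `r̂_t(i)` is unbiased for `r_t(i)` and that
the last term has expectation `∑_j (1 - r_t(j))² ≤ K`. Taking expectations, the choice of `η`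
balances `log K / η` against `η T K / 2`.
-/

open Finset Real

theorem exp_neg_le_one_sub_add_sq_div_two {x : ℝ} (hx : 0 ≤ x) :
    exp (-x) ≤ 1 - x + x ^ 2 / 2 := by
  have hmono : Monotone fun y : ℝ => 1 - y + y ^ 2 / 2 - exp (-y) := by
    refine monotone_of_hasDerivAt_nonneg (f' := fun y => -1 + y + exp (-y)) (fun y => ?_)
      fun y => by simp only [Pi.zero_apply]; linarith [add_one_le_exp (-y)]
    exact ((((hasDerivAt_id' y).const_sub 1).add ((hasDerivAt_pow 2 y).div_const 2)).sub
      (hasDerivAt_neg' y).exp).congr_deriv (by norm_num)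
  simpa using hmono hx

section ExpWeights

variable {ι : Type*} {η : ℝ}

theorem sum_mul_exp_le_exp [Fintype ι] {q g : ι → ℝ} (hq : ∀ j, 0 ≤ q j) (hq₁ : ∑ j, q j = 1)
    (hg : ∀ j, g j ≤ 1) (hη : 0 ≤ η) :
    ∑ j, q j * exp (η * g j) ≤
      exp (η * ∑ j, q j * g j + η ^ 2 / 2 * ∑ j, q j * (1 - g j) ^ 2) := by
  set X := η * ∑ j, q j * g j + η ^ 2 / 2 * ∑ j, q j * (1 - g j) ^ 2 with hX
  have hterm : ∀ j, q j * exp (η * g j) ≤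
      exp η * (q j - η * q j + η * (q j * g j) + η ^ 2 / 2 * (q j * (1 - g j) ^ 2)) := by
    intro j
    have h := exp_neg_le_one_sub_add_sq_div_two (mul_nonneg hη (sub_nonneg.2 (hg j)))
    calc q j * exp (η * g j) = q j * (exp η * exp (-(η * (1 - g j)))) := by
          rw [← exp_add]; ring_nf
      _ ≤ q j * (exp η * (1 - η * (1 - g j) + (η * (1 - g j)) ^ 2 / 2)) := by
          gcongr; exact hq j
      _ = _ := by ring
  calc ∑ j, q j * exp (η * g j) ≤ exp η * (X - η + 1) := by
        refine (sum_le_sum fun j _ => hterm j).trans_eq ?_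
        simp only [hX, ← mul_sum, sum_add_distrib, sum_sub_distrib, hq₁]
        ring
    _ ≤ exp η * exp (X - η) := by gcongr; exact add_one_le_exp _
    _ = exp X := by rw [← exp_add]; ring_nf

variable {n : ℕ} {w : ℕ → ι → ℝ} {g : Fin n → ι → ℝ}

theorem expWeights_pos (hw₀ : ∀ i, w 0 i = 1)
    (hw : ∀ (t : Fin n) i, w (t + 1) i = w t i * exp (η * g t i)) :
    ∀ m ≤ n, ∀ i, 0 < w m i
  | 0, _, i => by simp [hw₀]
  | m + 1, hm, i => by
    rw [show m + 1 = (⟨m, hm⟩ : Fin n) + 1 from rfl, hw]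
    exact mul_pos (expWeights_pos hw₀ hw m (by omega) i) (exp_pos _)

theorem sum_fin_telescope (f : ℕ → ℝ) : ∑ t : Fin n, (f (t + 1) - f t) = f n - f 0 := by
  rw [Fin.sum_univ_eq_sum_range (fun t => f (t + 1) - f t), sum_range_sub]

theorem expWeights_regret_le [Fintype ι] {p : Fin n → ι → ℝ} (hη : 0 ≤ η)
    (hg : ∀ t i, g t i ≤ 1) (hw₀ : ∀ i, w 0 i = 1)
    (hw : ∀ (t : Fin n) i, w (t + 1) i = w t i * exp (η * g t i))
    (hp : ∀ t j, p t j = w t j / ∑ l, w t l) (i : ι) :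
    η * ∑ t, g t i ≤ log (Fintype.card ι) +
      ∑ t, (η * ∑ j, p t j * g t j + η ^ 2 / 2 * ∑ j, p t j * (1 - g t j) ^ 2) := by
  have hpos := expWeights_pos hw₀ hw
  have hW : ∀ m ≤ n, 0 < ∑ l, w m l :=
    fun m hm => sum_pos (fun l _ => hpos m hm l) ⟨i, mem_univ i⟩
  have hlog_w : log (w n i) = η * ∑ t, g t i := by
    have := sum_fin_telescope (n := n) fun m => log (w m i)
    rw [hw₀, log_one, sub_zero] at this
    rw [← this, mul_sum]
    refine sum_congr rfl fun t _ => ?_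
    rw [hw, log_mul (hpos t t.is_le' i).ne' (exp_pos _).ne', log_exp]
    ring
  have hstep : ∀ t : Fin n, log (∑ l, w (t + 1) l) - log (∑ l, w t l) ≤
      η * ∑ j, p t j * g t j + η ^ 2 / 2 * ∑ j, p t j * (1 - g t j) ^ 2 := by
    intro t
    have hWt := hW t t.is_le'
    rw [← log_div (hW _ t.isLt).ne' hWt.ne', log_le_iff_le_exp (div_pos (hW _ t.isLt) hWt)]
    convert sum_mul_exp_le_exp (fun j => (hp t j).symm ▸ div_nonneg (hpos t t.is_le' j).le hWt.le)
      (by rw [sum_congr rfl fun j _ => hp t j, ← sum_div, div_self hWt.ne']) (hg t) hη using 1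
    simp only [hw, hp, sum_div, div_mul_eq_mul_div]
  calc η * ∑ t, g t i = log (w n i) := hlog_w.symm
    _ ≤ log (∑ l, w n l) :=
        log_le_log (hpos n le_rfl i) (single_le_sum (fun l _ => (hpos n le_rfl l).le) (mem_univ i))
    _ = log (Fintype.card ι) + ∑ t : Fin n, (log (∑ l, w (t + 1) l) - log (∑ l, w t l)) := by
        rw [sum_fin_telescope fun m => log (∑ l, w m l)]
        simp [hw₀]
    _ ≤ _ := by gcongr with t; exact hstep t

end ExpWeights

namespace SequentialSampling

variable {α : Type*} {n : ℕ}

def IsCausal {β : Type*} (q : (Fin n → α) → Fin n → β) : Prop :=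
  ∀ a b t, (∀ s < t, a s = b s) → q a t = q b t

def pathProb (q : (Fin n → α) → Fin n → α → ℝ) (a : Fin n → α) : ℝ :=
  ∏ t, q a t (a t)

theorem pathProb_nonneg {q : (Fin n → α) → Fin n → α → ℝ} (hq : ∀ a t j, 0 ≤ q a t j)
    (a : Fin n → α) : 0 ≤ pathProb q a :=
  prod_nonneg fun t _ => hq a t (a t)

def tailKernel (q : (Fin (n + 1) → α) → Fin (n + 1) → α → ℝ) (x : α) :
    (Fin n → α) → Fin n → α → ℝ :=
  fun b t => q (Fin.cons x b) t.succ

section Cons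

variable {q : (Fin (n + 1) → α) → Fin (n + 1) → α → ℝ}

theorem IsCausal.tail (hq : IsCausal q) (x : α) : IsCausal (tailKernel q x) := by
  intro a b t hab
  refine hq _ _ _ fun s hs => ?_
  cases s using Fin.cases with
  | zero => rfl
  | succ s => simpa using hab s (Fin.succ_lt_succ_iff.mp hs)

theorem IsCausal.apply_zero (hq : IsCausal q) (a b : Fin (n + 1) → α) : q a 0 = q b 0 :=
  hq a b 0 fun s hs => absurd hs (Fin.not_lt_zero s)

theorem pathProb_cons (x : α) (b : Fin n → α) :
    pathProb q (Fin.cons x b) = q (Fin.cons x b) 0 x * pathProb (tailKernel q x) b := by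
  simp [pathProb, tailKernel, Fin.prod_univ_succ]

theorem sum_pi_fin_succ [Fintype α] {M : Type*} [AddCommMonoid M] (f : (Fin (n + 1) → α) → M) :
    ∑ a, f a = ∑ x, ∑ b : Fin n → α, f (Fin.cons x b) := by
  rw [← (Fin.consEquiv fun _ => α).sum_comp, Fintype.sum_prod_type]
  rfl

theorem IsCausal.sum_pathProb_mul [Fintype α] (hq : IsCausal q) (a₀ : Fin (n + 1) → α)
    (F : (Fin (n + 1) → α) → ℝ) :
    ∑ a, pathProb q a * F a =
      ∑ x, q a₀ 0 x * ∑ b, pathProb (tailKernel q x) b * F (Fin.cons x b) := by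
  rw [sum_pi_fin_succ]
  refine sum_congr rfl fun x _ => ?_
  rw [mul_sum]
  refine sum_congr rfl fun b _ => ?_
  rw [pathProb_cons, hq.apply_zero _ a₀, mul_assoc]

end Cons

theorem IsCausal.apply_update {q : (Fin n → α) → Fin n → α → ℝ} (hq : IsCausal q)
    (a : Fin n → α) (t : Fin n) (j : α) : q (Function.update a t j) t = q a t :=
  hq _ _ _ fun _ hs => Function.update_of_ne hs.ne _ _

theorem sum_pathProb [Fintype α] [Nonempty α] {q : (Fin n → α) → Fin n → α → ℝ}
    (hq : IsCausal q) (hsum : ∀ a t, ∑ j, q a t j = 1) : ∑ a, pathProb q a = 1 := by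
  induction n with
  | zero => simp [pathProb]
  | succ n ih =>
    let a₀ : Fin (n + 1) → α := fun _ => Classical.arbitrary α
    simpa [ih (hq.tail _) fun b t => hsum _ _, hsum a₀ 0] using hq.sum_pathProb_mul a₀ fun _ => 1

-- The tower property at round `t`: the `t`-th draw may be replaced by a fresh draw from `q a t`.
theorem sum_pathProb_mul_resample [Fintype α] [Nonempty α] {q : (Fin n → α) → Fin n → α → ℝ}
    (hq : IsCausal q) (hsum : ∀ a t, ∑ j, q a t j = 1) (t : Fin n) (G : (Fin n → α) → ℝ)
    (hG : ∀ a b, (∀ s ≤ t, a s = b s) → G a = G b) :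
    ∑ a, pathProb q a * G a = ∑ a, pathProb q a * ∑ j, q a t j * G (Function.update a t j) := by
  induction n with
  | zero => exact t.elim0
  | succ n ih =>
    let a₀ : Fin (n + 1) → α := fun _ => Classical.arbitrary α
    rw [hq.sum_pathProb_mul a₀, hq.sum_pathProb_mul a₀]
    cases t using Fin.cases with
    | zero =>
      have hG₀ : ∀ a, G a = G fun _ => a 0 :=
        fun a => hG _ _ fun s hs => by rw [nonpos_iff_eq_zero.mp hs]
      have hmass x := sum_pathProb (hq.tail x) fun b t => hsum _ _
      simp only [hG₀ (Fin.cons _ _), hG₀ (Function.update _ _ _), hq.apply_zero _ a₀,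
        Fin.cons_zero, Function.update_self, ← sum_mul, hmass, one_mul, hsum a₀ 0]
    | succ s =>
      refine sum_congr rfl fun x _ => ?_
      rw [ih (hq.tail x) (fun b t => hsum _ _) s fun b => G (Fin.cons x b)]
      · simp [tailKernel, Fin.cons_update]
      · intro b b' hb
        refine hG _ _ fun u hu => ?_
        cases u using Fin.cases with
        | zero => rfl
        | succ u => simpa using hb u (Fin.succ_le_succ_iff.mp hu)

theorem sum_pathProb_mul_eq_of_resample [Fintype α] [Nonempty α]
    {q : (Fin n → α) → Fin n → α → ℝ} (hq : IsCausal q) (hsum : ∀ a t, ∑ j, q a t j = 1)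
    (t : Fin n) {G : (Fin n → α) → ℝ} (hG : ∀ a b, (∀ s ≤ t, a s = b s) → G a = G b) {c : ℝ}
    (hc : ∀ a, ∑ j, q a t j * G (Function.update a t j) = c) :
    ∑ a, pathProb q a * G a = c := by
  simp only [sum_pathProb_mul_resample hq hsum t G hG, hc, ← sum_mul, sum_pathProb hq hsum,
    one_mul]

end SequentialSampling

section ImportanceWeighting

variable {ι : Type*} [DecidableEq ι]

noncomputable def importanceWeightedReward (q : ι → ℝ) (k : ι) (x : ℝ) (j : ι) : ℝ :=
  1 - (if k = j then (1 : ℝ) else 0) / q j * (1 - x)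

variable {q : ι → ℝ} {k : ι} {x : ℝ}

theorem importanceWeightedReward_le_one (hq : ∀ j, 0 ≤ q j) (hx : x ≤ 1) (j : ι) :
    importanceWeightedReward q k x j ≤ 1 := by
  have : 0 ≤ (if k = j then (1 : ℝ) else 0) / q j * (1 - x) :=
    mul_nonneg (div_nonneg (by split_ifs <;> norm_num) (hq j)) (sub_nonneg.2 hx)
  rw [importanceWeightedReward]
  linarith

theorem mul_importanceWeightedReward {j : ι} (h : k = j → q j ≠ 0) :
    q j * importanceWeightedReward q k x j = q j - if k = j then 1 - x else 0 := by
  split_ifs with hkj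
  · subst hkj
    rw [importanceWeightedReward, if_pos rfl]
    field_simp [h rfl]
  · simp [importanceWeightedReward, hkj]

theorem sum_mul_importanceWeightedReward [Fintype ι] (hq₁ : ∑ j, q j = 1) (hk : q k ≠ 0) :
    ∑ j, q j * importanceWeightedReward q k x j = x := by
  rw [sum_congr rfl fun j _ => mul_importanceWeightedReward fun h => h ▸ hk]
  simp [sum_sub_distrib, hq₁]

theorem sum_mul_importanceWeightedReward_apply [Fintype ι] (hq₁ : ∑ j, q j = 1) {i : ι}
    (hi : q i ≠ 0) (x : ι → ℝ) : ∑ k, q k * importanceWeightedReward q k (x k) i = x i := by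
  have hterm : ∀ k, q k * importanceWeightedReward q k (x k) i =
      q k - if k = i then 1 - x i else 0 := by
    intro k
    split_ifs with hki
    · subst hki
      simpa using mul_importanceWeightedReward (k := k) (x := x k) fun _ => hi
    · simp [importanceWeightedReward, hki]
  simp [hterm, sum_sub_distrib, hq₁]

theorem sum_mul_one_sub_importanceWeightedReward_sq [Fintype ι] :
    ∑ j, q j * (1 - importanceWeightedReward q k x j) ^ 2 = (1 - x) ^ 2 / q k := by
  rw [sum_eq_single k (fun j _ hj => by simp [importanceWeightedReward, Ne.symm hj])
    (fun h => absurd (mem_univ k) h)]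
  by_cases hk : q k = 0
  · simp [hk]
  · simp [importanceWeightedReward]
    field_simp

end ImportanceWeighting

open SequentialSampling

section Exp3

variable {K T : ℕ} {η : ℝ} {r : Fin T → Fin K → ℝ}

noncomputable def exp3Prob (K T : ℕ) (η : ℝ) (r : Fin T → Fin K → ℝ) (a : Fin T → Fin K)
    (t : ℕ) (i : Fin K) : ℝ :=
  exp3Weights K T η r a t i / ∑ j, exp3Weights K T η r a t j

theorem exp3Weights_succ (a : Fin T → Fin K) (t : Fin T) (i : Fin K) :
    exp3Weights K T η r a (t + 1) i = exp3Weights K T η r a t i *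
      exp (η * importanceWeightedReward (exp3Prob K T η r a t) (a t) (r t (a t)) i) := by
  simp only [exp3Weights, dif_pos t.isLt]
  rfl

theorem exp3Weights_congr {a b : Fin T → Fin K} :
    ∀ m, (∀ s : Fin T, (s : ℕ) < m → a s = b s) → exp3Weights K T η r a m = exp3Weights K T η r b m
  | 0, _ => rfl
  | m + 1, hab => by
    have ih := exp3Weights_congr m fun s hs => hab s (Nat.lt_succ_of_lt hs)
    by_cases hm : m < T
    · funext i
      simp only [exp3Weights, dif_pos hm, ih, hab ⟨m, hm⟩ (Nat.lt_succ_self m)]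
    · funext i
      simp only [exp3Weights, dif_neg hm, ih]

theorem exp3Prob_congr {a b : Fin T → Fin K} {t : ℕ} (hab : ∀ s : Fin T, (s : ℕ) < t → a s = b s) :
    exp3Prob K T η r a t = exp3Prob K T η r b t := by
  funext i
  simp only [exp3Prob, exp3Weights_congr t hab]

theorem isCausal_exp3Prob : IsCausal fun a (t : Fin T) => exp3Prob K T η r a t :=
  fun _ _ _ hab => exp3Prob_congr fun s hs => hab s hs

theorem exp3Prob_update (a : Fin T → Fin K) (t : Fin T) (j : Fin K) :
    exp3Prob K T η r (Function.update a t j) t = exp3Prob K T η r a t :=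
  isCausal_exp3Prob.apply_update a t j

theorem exp3Weights_pos (a : Fin T → Fin K) {m : ℕ} (hm : m ≤ T) (i : Fin K) :
    0 < exp3Weights K T η r a m i :=
  expWeights_pos (fun _ => rfl) (exp3Weights_succ a) m hm i

theorem exp3Prob_pos (a : Fin T → Fin K) (t : Fin T) (i : Fin K) :
    0 < exp3Prob K T η r a t i :=
  div_pos (exp3Weights_pos a t.is_le' i)
    (sum_pos (fun j _ => exp3Weights_pos a t.is_le' j) ⟨i, mem_univ i⟩)

theorem sum_exp3Prob [NeZero K] (a : Fin T → Fin K) (t : Fin T) :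
    ∑ i, exp3Prob K T η r a t i = 1 := by
  simp only [exp3Prob]
  rw [← sum_div, div_self (sum_pos (fun j _ => exp3Weights_pos a t.is_le' j) ⟨0, mem_univ 0⟩).ne']

theorem exp3_pathwise_bound [NeZero K] (hη : 0 ≤ η) (hr : ∀ t i, r t i ≤ 1)
    (a : Fin T → Fin K) (i : Fin K) :
    η * ∑ t : Fin T, importanceWeightedReward (exp3Prob K T η r a t) (a t) (r t (a t)) i ≤
      log K + ∑ t : Fin T, (η * r t (a t) +
        η ^ 2 / 2 * ((1 - r t (a t)) ^ 2 / exp3Prob K T η r a t (a t))) := by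
  simpa only [Fintype.card_fin, sum_mul_one_sub_importanceWeightedReward_sq,
    sum_mul_importanceWeightedReward (sum_exp3Prob a _) (exp3Prob_pos a _ _).ne'] using
    expWeights_regret_le (p := fun t => exp3Prob K T η r a t) hη
      (fun t => importanceWeightedReward_le_one (fun j => (exp3Prob_pos a t j).le) (hr t (a t)))
      (fun _ => rfl) (exp3Weights_succ a) (fun _ _ => rfl) i

noncomputable def exp3Law (K T : ℕ) (η : ℝ) (r : Fin T → Fin K → ℝ) : (Fin T → Fin K) → ℝ :=
  pathProb fun a t => exp3Prob K T η r a t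

theorem exp3_expected_importanceWeightedReward [NeZero K] (t : Fin T) (i : Fin K) :
    ∑ a, exp3Law K T η r a *
      importanceWeightedReward (exp3Prob K T η r a t) (a t) (r t (a t)) i = r t i := by
  refine sum_pathProb_mul_eq_of_resample isCausal_exp3Prob sum_exp3Prob t
    (fun a b hab => ?_) fun a => ?_
  · rw [exp3Prob_congr fun s (hs : s < t) => hab s hs.le, hab t le_rfl]
  · simp only [Function.update_self, exp3Prob_update]
    exact sum_mul_importanceWeightedReward_apply (sum_exp3Prob a t) (exp3Prob_pos a t i).ne' (r t)

theorem exp3_expected_sq_div [NeZero K] (t : Fin T) :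
    ∑ a, exp3Law K T η r a *
      ((1 - r t (a t)) ^ 2 / exp3Prob K T η r a t (a t)) = ∑ j, (1 - r t j) ^ 2 := by
  refine sum_pathProb_mul_eq_of_resample isCausal_exp3Prob sum_exp3Prob t
    (fun a b hab => ?_) fun a => ?_
  · rw [exp3Prob_congr fun s (hs : s < t) => hab s hs.le, hab t le_rfl]
  · refine sum_congr rfl fun j _ => ?_
    simp only [Function.update_self, exp3Prob_update]
    field_simp [(exp3Prob_pos a t j).ne']

theorem exp3_expected_bound [NeZero K] (hη : 0 ≤ η) (hr : ∀ t i, r t i ≤ 1) (i : Fin K) :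
    η * ∑ t, r t i ≤ log K +
      η * ∑ a, exp3Law K T η r a * ∑ t, r t (a t) +
        η ^ 2 / 2 * ∑ t, ∑ j, (1 - r t j) ^ 2 := by
  have hP : ∀ a, 0 ≤ exp3Law K T η r a :=
    pathProb_nonneg fun a t j => (exp3Prob_pos a t j).le
  have hP₁ : ∑ a, exp3Law K T η r a = 1 := sum_pathProb isCausal_exp3Prob sum_exp3Prob
  calc η * ∑ t, r t i
      = ∑ a, exp3Law K T η r a *
          (η * ∑ t : Fin T, importanceWeightedReward (exp3Prob K T η r a t) (a t) (r t (a t)) i) := by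
        simp only [← exp3_expected_importanceWeightedReward (η := η) _ i, mul_sum]
        rw [sum_comm]
        simp only [mul_left_comm η]
    _ ≤ ∑ a, exp3Law K T η r a * (log K + ∑ t : Fin T, (η * r t (a t) +
          η ^ 2 / 2 * ((1 - r t (a t)) ^ 2 / exp3Prob K T η r a t (a t)))) :=
        sum_le_sum fun a _ => mul_le_mul_of_nonneg_left (exp3_pathwise_bound hη hr a i) (hP a)
    _ = _ := by
        simp only [← exp3_expected_sq_div (η := η), mul_add, sum_add_distrib, mul_sum, ← sum_mul,
          hP₁, one_mul, mul_left_comm (exp3Law K T η r _)]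
        rw [add_assoc]
        congr 2
        exact sum_comm

end Exp3

theorem sum_sum_one_sub_sq_le {K T : ℕ} {r : Fin T → Fin K → ℝ}
    (hr : ∀ t i, r t i ∈ Set.Icc (0 : ℝ) 1) : ∑ t, ∑ j, (1 - r t j) ^ 2 ≤ (K * T : ℝ) :=
  calc ∑ t, ∑ j, (1 - r t j) ^ 2 ≤ ∑ t : Fin T, ∑ j : Fin K, (1 : ℝ) :=
        sum_le_sum fun t _ => sum_le_sum fun j _ =>
          pow_le_one₀ (sub_nonneg.2 (hr t j).2) (by linarith [(hr t j).1])
    _ = K * T := by simp [mul_comm]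

theorem div_sqrt_add_sqrt_div_two_mul {L N : ℝ} (hL : 0 < L) (hN : 0 < N) :
    L / √(2 * L / N) + √(2 * L / N) / 2 * N = √(2 * L * N) := by
  set s := √(2 * L / N)
  have hs : 0 < s := sqrt_pos.2 (by positivity)
  have hsq : s ^ 2 = 2 * L / N := sq_sqrt (by positivity)
  have h₁ : L / s = s / 2 * N := by
    rw [div_eq_iff hs.ne', show s / 2 * N * s = s ^ 2 * N / 2 by ring, hsq]
    field_simp
  have h₂ : √(2 * L * N) = s * N := by
    rw [← sqrt_sq (by positivity : 0 ≤ s * N), mul_pow, hsq]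
    field_simp
  rw [h₁, h₂]
  ring

/-- **Expected regret bound for EXP3.**
In the adversarial bandit with K ≥ 2 arms, horizon T ≥ 1, rewards r_t(i) ∈ [0,1]
fixed in advance, and learning rate η = √(2 log K/(K T)), EXP3 — which at round
t samples arm a_t from p_t (proportional to the current weights) and updates the
weights with importance-weighted reward estimates — satisfies
max_i Σ_t r_t(i) − E[Σ_t r_t(a_t)] ≤ √(2 T K log K), the expectation being over
the product of the per-round sampling distributions along the realized arm
sequence. -/
theorem exp3_expected_regret (K T : ℕ) (hK : 2 ≤ K) (hT : 1 ≤ T)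
    (r : Fin T → Fin K → ℝ) (hr : ∀ t i, r t i ∈ Set.Icc (0 : ℝ) 1)
    (η : ℝ) (hη : η = Real.sqrt (2 * Real.log K / (K * T)))
    (p : (Fin T → Fin K) → Fin T → Fin K → ℝ)
    (hp : ∀ (a : Fin T → Fin K) (t : Fin T) (i : Fin K),
      p a t i = exp3Weights K T η r a (t : ℕ) i / ∑ j, exp3Weights K T η r a (t : ℕ) j)
    (P : (Fin T → Fin K) → ℝ)
    (hP : ∀ a : Fin T → Fin K, P a = ∏ t, p a t (a t)) :
    Finset.univ.sup' ⟨⟨0, by omega⟩, Finset.mem_univ _⟩ (fun i : Fin K => ∑ t, r t i) -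
        (∑ a : Fin T → Fin K, P a * ∑ t, r t (a t)) ≤
      Real.sqrt (2 * T * K * Real.log K) := by
  have : NeZero K := ⟨by omega⟩
  have hL : 0 < log K := log_pos (by exact_mod_cast hK)
  have hN : (0 : ℝ) < K * T := mul_pos (Nat.cast_pos.2 (by omega)) (Nat.cast_pos.2 hT)
  have hη₀ : 0 < η := hη ▸ sqrt_pos.2 (div_pos (by positivity) hN)
  obtain rfl : p = fun a (t : Fin T) => exp3Prob K T η r a t :=
    funext fun a => funext fun t => funext (hp a t)
  obtain rfl : P = exp3Law K T η r := funext hP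
  have htune : log K / η + η / 2 * (K * T) = √(2 * T * K * log K) := by
    rw [hη, div_sqrt_add_sqrt_div_two_mul hL hN]
    ring_nf
  refine sub_le_iff_le_add.2 (sup'_le _ _ fun i _ => ?_)
  have h := exp3_expected_bound hη₀.le (fun t i => (hr t i).2) i
  have h' := mul_le_mul_of_nonneg_left (sum_sum_one_sub_sq_le hr) (by positivity : 0 ≤ η ^ 2 / 2)
  rw [← htune]
  refine le_of_mul_le_mul_left ?_ hη₀
  rw [mul_add, mul_add, mul_div_cancel₀ _ hη₀.ne']
  linarith
end
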